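/- arXiv:1403.5673 — 2 statements merged into one kernel-verified Lean document; each statement's English description precedes it below -/
import Mathlib

section
/- Let F be a field and let n ≥ 1, m ≥ 1. The algebra R_{n,m} of m generic n × n matrices over F is an integral domain, i.e. it has no zero divisors: if u, v ∈ R_{n,m} and uv = 0 then u = 0 or v = 0. (Amitsur's theorem.) -/
/-- The `l`-th generic `n × n` matrix: the matrix whose `(i,j)` entry is the polynomial
variable `x^{(l)}_{ij}` of the commutative polynomial ring
`A = F[x^{(l)}_{ij} : 1 ≤ i,j ≤ n, 1 ≤ l ≤ m]`. -/
noncomputable def genericMatrix (F : Type) [Field F] (n m : ℕ) (l : Fin m) :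
    Matrix (Fin n) (Fin n) (MvPolynomial (Fin m × Fin n × Fin n) F) :=
  Matrix.of fun i j => MvPolynomial.X (l, i, j)

/-- The algebra `R_{n,m}` of `m` generic `n × n` matrices: the `F`-subalgebra of `Mₙ(A)`
generated by the generic matrices `X₁, …, X_m`. -/
noncomputable def genericMatrixAlgebra (F : Type) [Field F] (n m : ℕ) :
    Subalgebra F (Matrix (Fin n) (Fin n) (MvPolynomial (Fin m × Fin n × Fin n) F)) :=
  Algebra.adjoin F (Set.range (genericMatrix F n m))

/-!
Let `σ` be an automorphism of a commutative domain `S` with `σ ^ n = 1`. Representing `a * u ^ d`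
(`a ∈ S[t]`, `u * a = σ a * u`, `u ^ n = t`) by an `n × n` matrix over `S[t]` embeds the skew
polynomial ring `S[u; σ]` in `Mₙ(S[t])`, and it is a domain: the lowest-order terms in `u` of a
product multiply without cancellation.

Take `S = F[y₀, …, y_{n-1}, z]` with `σ` cycling the `y_i`, and send `X_l` to the generic
element `∑_{q,d} z_{l,q,d} y₀ ^ q u ^ d`. On entries this is the substitution sending
`x^{(l)}_{i,i+d}` to `∑_q y_i ^ q z_{l,q,d}` up to a power of `t`; over the fraction field of
`S[t]` this is an invertible (Vandermonde) linear change of variables, hence injective. So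
`R_{n,m}` embeds in a domain.
-/

open scoped Polynomial

namespace Polynomial

theorem natTrailingDegree_map_of_injective {R S : Type*} [Semiring R] [Semiring S] {f : R →+* S}
    (hf : Function.Injective f) (p : R[X]) :
    (p.map f).natTrailingDegree = p.natTrailingDegree := by
  simp only [natTrailingDegree, trailingDegree, support_map_of_injective p hf]

end Polynomial

theorem Matrix.vandermonde_mul_inv {K : Type*} [Field K] {n : ℕ} {y : Fin n → K}
    (hy : Function.Injective y) : vandermonde y * (vandermonde y)⁻¹ = 1 :=
  mul_nonsing_inv _ (isUnit_iff_ne_zero.2 (det_vandermonde_ne_zero_iff.2 hy))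

noncomputable section

namespace MvPolynomial

def cyclicShift (R ι : Type*) [CommSemiring R] (n : ℕ) [NeZero n] :
    Multiplicative (Fin n) →* MvPolynomial (Fin n ⊕ ι) R →ₐ[R] MvPolynomial (Fin n ⊕ ι) R where
  toFun g := rename (Sum.map (· + g.toAdd) id)
  map_one' := by
    ext (i | i) <;> simp
  map_mul' g h := by
    ext (i | i) : 1
    · simp [add_assoc, add_comm (Multiplicative.toAdd g)]
    · simp

end MvPolynomial

namespace CyclicAlgebra

open Polynomial

variable {R A : Type*} [CommRing R] [CommRing A] [Algebra R A] {n : ℕ}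

def carry (i j : Fin n) : ℕ := ((i : ℕ) + j) / n

/-- Since `X = u ^ n`, this is the order in `u` of `a i * u ^ i`. -/
def weight (a : Fin n → A[X]) (i : Fin n) : ℕ := n * (a i).natTrailingDegree + i

theorem exists_weight_lt {a : Fin n → A[X]} (ha : a ≠ 0) :
    ∃ i₀, a i₀ ≠ 0 ∧ ∀ i ≠ i₀, a i ≠ 0 → weight a i₀ < weight a i := by
  classical
  obtain ⟨i₀, hi₀, hmin⟩ := Finset.exists_min_image {i | a i ≠ 0} (weight a)
    (by simpa [Finset.Nonempty, Function.ne_iff] using ha)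
  refine ⟨i₀, by simpa using hi₀, fun i hi hai => (hmin i (by simpa using hai)).lt_of_ne
    fun h => hi ?_⟩
  -- the weight of `i` is `i` mod `n`
  simpa [weight, Nat.mul_add_mod, Nat.mod_eq_of_lt, Fin.val_inj] using (congrArg (· % n) h).symm

variable [NeZero n]

theorem carry_zero_left (p : Fin n) : carry 0 p = 0 := by
  simp [carry, Nat.div_eq_of_lt p.isLt]

theorem carry_zero_right (p : Fin n) : carry p 0 = 0 := by
  simp [carry, Nat.div_eq_of_lt p.isLt]

theorem carry_add_carry (p i j : Fin n) :
    carry p i + carry (p + i) j = carry i j + carry p (i + j) := by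
  have key : ∀ x y : ℕ, x / n + (x % n + y) / n = (x + y) / n := fun x y => by
    conv_rhs => rw [← Nat.mod_add_div x n, add_right_comm, Nat.add_mul_div_left _ _ (NeZero.pos n)]
    ring
  simp only [carry, Fin.val_add, key]
  rw [add_comm (p : ℕ) (((i : ℕ) + j) % n), key, add_comm, ← add_assoc]
  ring_nf

variable (ρ : Multiplicative (Fin n) →* A →ₐ[R] A)

/-- The matrix of `∑ d, a d * u ^ d`, where `u * c = ρ (ofAdd 1) c * u` and `u ^ n = X`.
The power of `X` in entry `(p, q)` records whether `p + (q - p)` wraps around `n`. -/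
def ofCoeffs (a : Fin n → A[X]) : Matrix (Fin n) (Fin n) A[X] :=
  Matrix.of fun p q => (a (q - p)).map (ρ (.ofAdd p) : A →+* A) * X ^ carry p (q - p)

def mulTerm (f g : A[X]) (i j : Fin n) : A[X] :=
  f * g.map (ρ (.ofAdd i) : A →+* A) * X ^ carry i j

def mulCoeffs (a b : Fin n → A[X]) (k : Fin n) : A[X] :=
  ∑ i, mulTerm ρ (a i) (b (k - i)) i (k - i)

theorem map_map_ofAdd (b : A[X]) (p i : Fin n) :
    (b.map (ρ (.ofAdd i) : A →+* A)).map (ρ (.ofAdd p) : A →+* A)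
      = b.map (ρ (.ofAdd (p + i)) : A →+* A) := by
  rw [Polynomial.map_map, ofAdd_add, map_mul]
  rfl

theorem ofCoeffs_mul (a b : Fin n → A[X]) :
    ofCoeffs ρ a * ofCoeffs ρ b = ofCoeffs ρ (mulCoeffs ρ a b) := by
  refine Matrix.ext fun p q => ?_
  simp only [Matrix.mul_apply, ofCoeffs, mulCoeffs, mulTerm, Matrix.of_apply, Polynomial.map_sum,
    Polynomial.map_mul, Polynomial.map_pow, Polynomial.map_X, map_map_ofAdd, Finset.sum_mul]
  rw [← Equiv.sum_comp (Equiv.addLeft p)]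
  refine Finset.sum_congr rfl fun i _ => ?_
  simp only [Equiv.coe_addLeft, add_sub_cancel_left, sub_sub]
  have hcarry := carry_add_carry p i (q - (p + i))
  rw [show i + (q - (p + i)) = q - p by abel] at hcarry
  rw [mul_mul_mul_comm, ← pow_add, hcarry, pow_add]
  ring

theorem ofCoeffs_add (a b : Fin n → A[X]) :
    ofCoeffs ρ a + ofCoeffs ρ b = ofCoeffs ρ (a + b) :=
  Matrix.ext fun p q => by simp [ofCoeffs, add_mul]

theorem ofCoeffs_zero : ofCoeffs ρ 0 = 0 :=
  Matrix.ext fun p q => by simp [ofCoeffs]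

theorem algebraMap_eq_ofCoeffs (r : R) :
    algebraMap R (Matrix (Fin n) (Fin n) A[X]) r
      = ofCoeffs ρ (Pi.single 0 (algebraMap R A[X] r)) := by
  refine Matrix.ext fun p q => ?_
  rcases eq_or_ne p q with rfl | hpq
  · simp [ofCoeffs, carry_zero_right, Polynomial.algebraMap_apply, Matrix.algebraMap_matrix_apply]
  · simp [ofCoeffs, Matrix.algebraMap_matrix_apply, hpq, sub_eq_zero, hpq.symm]

theorem ofCoeffs_apply_zero (a : Fin n → A[X]) (q : Fin n) : ofCoeffs ρ a 0 q = a q := by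
  simp only [ofCoeffs, Matrix.of_apply, sub_zero, ofAdd_zero, map_one, carry_zero_left, pow_zero,
    mul_one]
  exact Polynomial.map_id

theorem ofCoeffs_injective : Function.Injective (ofCoeffs ρ) := fun a b h =>
  funext fun q => by rw [← ofCoeffs_apply_zero ρ a, h, ofCoeffs_apply_zero]

def subalgebra : Subalgebra R (Matrix (Fin n) (Fin n) A[X]) where
  carrier := Set.range (ofCoeffs ρ)
  mul_mem' := by
    rintro _ _ ⟨a, rfl⟩ ⟨b, rfl⟩
    exact ⟨mulCoeffs ρ a b, (ofCoeffs_mul ρ a b).symm⟩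
  add_mem' := by
    rintro _ _ ⟨a, rfl⟩ ⟨b, rfl⟩
    exact ⟨a + b, (ofCoeffs_add ρ a b).symm⟩
  algebraMap_mem' r := ⟨_, (algebraMap_eq_ofCoeffs ρ r).symm⟩

theorem apply_injective (g : Multiplicative (Fin n)) : Function.Injective (ρ g : A →+* A) :=
  fun x y h => by simpa [← AlgHom.mul_apply, ← map_mul] using congrArg (ρ g⁻¹) h

theorem map_ne_zero_of_ne_zero {g : A[X]} (hg : g ≠ 0) (i : Fin n) :
    g.map (ρ (.ofAdd i) : A →+* A) ≠ 0 :=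
  (Polynomial.map_ne_zero_iff (apply_injective ρ _)).2 hg

section Domain

variable [IsDomain A]

theorem mulTerm_ne_zero {f g : A[X]} (hf : f ≠ 0) (hg : g ≠ 0) (i j : Fin n) :
    mulTerm ρ f g i j ≠ 0 :=
  mul_ne_zero (mul_ne_zero hf (map_ne_zero_of_ne_zero ρ hg i)) (pow_ne_zero _ X_ne_zero)

theorem natTrailingDegree_mulTerm {f g : A[X]} (hf : f ≠ 0) (hg : g ≠ 0) (i j : Fin n) :
    (mulTerm ρ f g i j).natTrailingDegree
      = f.natTrailingDegree + g.natTrailingDegree + carry i j := by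
  have hg' := map_ne_zero_of_ne_zero ρ hg i
  rw [mulTerm, natTrailingDegree_mul (mul_ne_zero hf hg') (pow_ne_zero _ X_ne_zero),
    natTrailingDegree_mul hf hg', natTrailingDegree_X_pow,
    natTrailingDegree_map_of_injective (apply_injective ρ _)]

theorem weight_add_weight {a b : Fin n → A[X]} {i j : Fin n} (ha : a i ≠ 0) (hb : b j ≠ 0) :
    weight a i + weight b j
      = n * (mulTerm ρ (a i) (b j) i j).natTrailingDegree + (i + j : Fin n) := by
  rw [natTrailingDegree_mulTerm ρ ha hb, Fin.val_add, weight, weight, carry]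
  have := Nat.div_add_mod ((i : ℕ) + j) n
  ring_nf
  omega

/-- The coefficient of the lowest power of `u` in the product is the product of the lowest
coefficients of the factors. -/
theorem mulCoeffs_ne_zero {a b : Fin n → A[X]} (ha : a ≠ 0) (hb : b ≠ 0) :
    mulCoeffs ρ a b ≠ 0 := by
  obtain ⟨i₀, hai₀, hi₀⟩ := exists_weight_lt ha
  obtain ⟨j₀, hbj₀, hj₀⟩ := exists_weight_lt hb
  have h₀ := weight_add_weight ρ hai₀ hbj₀
  have h_other : ∀ i ≠ i₀, ∀ j, i + j = i₀ + j₀ → (mulTerm ρ (a i) (b j) i j).coeff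
      (mulTerm ρ (a i₀) (b j₀) i₀ j₀).natTrailingDegree = 0 := by
    intro i hi j hij
    by_cases hai : a i = 0
    · simp [mulTerm, hai]
    by_cases hbj : b j = 0
    · simp [mulTerm, hbj]
    refine coeff_eq_zero_of_lt_natTrailingDegree (Nat.lt_of_mul_lt_mul_left (a := n) ?_)
    have hb_le : weight b j₀ ≤ weight b j := by
      rcases eq_or_ne j j₀ with rfl | hj
      exacts [le_rfl, (hj₀ j hj hbj).le]
    have h₁ := weight_add_weight ρ hai hbj
    rw [hij] at h₁
    have := hi₀ i hi hai
    omega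
  have hcoeff : (mulCoeffs ρ a b (i₀ + j₀)).coeff
      (mulTerm ρ (a i₀) (b j₀) i₀ j₀).natTrailingDegree
      = (mulTerm ρ (a i₀) (b j₀) i₀ j₀).trailingCoeff := by
    rw [mulCoeffs, finsetSum_coeff, Finset.sum_eq_single i₀
      (fun i _ hi => h_other i hi _ (add_sub_cancel i _)) (by simp), add_sub_cancel_left]
    rfl
  intro h
  rw [h, Pi.zero_apply, coeff_zero, eq_comm, trailingCoeff_eq_zero] at hcoeff
  exact mulTerm_ne_zero ρ hai₀ hbj₀ i₀ j₀ hcoeff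

instance : NoZeroDivisors (subalgebra ρ) := by
  refine ⟨fun {x y} hxy => ?_⟩
  obtain ⟨_, a, rfl⟩ := x
  obtain ⟨_, b, rfl⟩ := y
  have hab : mulCoeffs ρ a b = 0 := ofCoeffs_injective ρ <| by
    rw [← ofCoeffs_mul, ofCoeffs_zero]
    exact congrArg Subtype.val hxy
  rcases eq_or_ne a 0 with rfl | ha
  · exact .inl (Subtype.ext (ofCoeffs_zero ρ))
  rcases eq_or_ne b 0 with rfl | hb
  · exact .inr (Subtype.ext (ofCoeffs_zero ρ))
  exact absurd hab (mulCoeffs_ne_zero ρ ha hb)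

end Domain

end CyclicAlgebra

namespace GenericMatrix

open CyclicAlgebra MvPolynomial

variable (F : Type) [Field F] (n m : ℕ)

abbrev Coeffs : Type := MvPolynomial (Fin n ⊕ Fin m × Fin n × Fin n) F

abbrev Frac : Type := FractionRing (Coeffs F n m)[X]

def yFrac (i : Fin n) : Frac F n m := algebraMap _ _ (Polynomial.C (X (Sum.inl i) : Coeffs F n m))

def tFrac : Frac F n m := algebraMap _ _ (Polynomial.X : (Coeffs F n m)[X])

theorem yFrac_injective : Function.Injective (yFrac F n m) := fun i j h => by
  simpa [yFrac, (IsFractionRing.injective _ _).eq_iff] using h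

theorem tFrac_ne_zero : tFrac F n m ≠ 0 :=
  (map_ne_zero_iff _ (IsFractionRing.injective _ _)).2 Polynomial.X_ne_zero

def retractionZ (v : Fin m × Fin n × Fin n) : MvPolynomial (Fin m × Fin n × Fin n) (Frac F n m) :=
  ∑ i, C ((Matrix.vandermonde (yFrac F n m))⁻¹ v.2.1 i * (tFrac F n m)⁻¹ ^ carry i v.2.2)
    * X (v.1, i, i + v.2.2)

theorem sum_pow_mul_retractionZ (l : Fin m) (i d : Fin n) :
    ∑ q : Fin n, C (yFrac F n m i) ^ (q : ℕ) * retractionZ F n m (l, q, d)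
      = C ((tFrac F n m)⁻¹ ^ carry i d) * X (l, i, i + d) := by
  have hV := congrFun (congrFun (Matrix.vandermonde_mul_inv (yFrac_injective F n m)) i)
  simp only [Matrix.mul_apply, Matrix.vandermonde_apply, Matrix.one_apply] at hV
  simp only [retractionZ, Finset.mul_sum, ← mul_assoc, ← map_pow, ← map_mul]
  rw [Finset.sum_comm]
  simp only [← Finset.sum_mul, ← map_sum, hV, ite_mul, one_mul, zero_mul, apply_ite C, map_zero,
    Finset.sum_ite_eq, Finset.mem_univ, if_true]

/-- Over the fraction field, the entries of the generic elements `cyclicElement` are an invertible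
linear change of the variables `z`; this undoes it. -/
def retraction : (Coeffs F n m)[X] →+* MvPolynomial (Fin m × Fin n × Fin n) (Frac F n m) :=
  Polynomial.eval₂RingHom
    (eval₂Hom (C.comp (algebraMap F _)) (Sum.elim (fun i => C (yFrac F n m i)) (retractionZ F n m)))
    (C (tFrac F n m))

variable [NeZero n]

def cyclicElement (l : Fin m) : Matrix (Fin n) (Fin n) (Coeffs F n m)[X] :=
  ofCoeffs (cyclicShift F _ n) fun d =>
    Polynomial.C (∑ q : Fin n, X (.inl 0) ^ (q : ℕ) * X (.inr (l, q, d)))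

theorem cyclicElement_apply (l : Fin m) (i j : Fin n) :
    cyclicElement F n m l i j
      = Polynomial.C (∑ q : Fin n, X (.inl i) ^ (q : ℕ) * X (.inr (l, q, j - i)))
        * Polynomial.X ^ carry i (j - i) := by
  rw [cyclicElement, ofCoeffs, Matrix.of_apply, Polynomial.map_C]
  simp [cyclicShift]

def specialization : MvPolynomial (Fin m × Fin n × Fin n) F →ₐ[F] (Coeffs F n m)[X] :=
  aeval fun v => cyclicElement F n m v.1 v.2.1 v.2.2

theorem retraction_comp_specialization :
    (retraction F n m).comp (specialization F n m).toRingHom = map (algebraMap F _) := by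
  refine ringHom_ext (fun f => ?_) fun ⟨l, i, j⟩ => ?_
  · simp [retraction, specialization, Polynomial.algebraMap_apply, algebraMap_eq]
  · rw [RingHom.comp_apply, AlgHom.toRingHom_eq_coe, RingHom.coe_coe, specialization, aeval_X,
      cyclicElement_apply, map_X, retraction, Polynomial.coe_eval₂RingHom, Polynomial.eval₂_mul,
      Polynomial.eval₂_C, Polynomial.eval₂_X_pow]
    simp only [map_sum, map_mul, map_pow, eval₂Hom_X', Sum.elim_inl, Sum.elim_inr]
    rw [sum_pow_mul_retractionZ, add_sub_cancel, mul_right_comm, ← map_pow, ← map_mul, inv_pow,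
      inv_mul_cancel₀ (pow_ne_zero _ (tFrac_ne_zero F n m)), map_one, one_mul]

theorem specialization_injective : Function.Injective (specialization F n m) := by
  have h := map_injective (σ := Fin m × Fin n × Fin n) _ (algebraMap F (Frac F n m)).injective
  rw [← retraction_comp_specialization, RingHom.coe_comp] at h
  exact h.of_comp

theorem mapMatrix_specialization_genericMatrix (l : Fin m) :
    (specialization F n m).mapMatrix (genericMatrix F n m l) = cyclicElement F n m l :=
  Matrix.ext fun _ _ => aeval_X _ _

theorem genericMatrixAlgebra_le_comap :
    genericMatrixAlgebra F n m
      ≤ (subalgebra (cyclicShift F (Fin m × Fin n × Fin n) n)).comap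
        (specialization F n m).mapMatrix :=
  Algebra.adjoin_le <| Set.range_subset_iff.2 fun l => by
    rw [SetLike.mem_coe, Subalgebra.mem_comap, mapMatrix_specialization_genericMatrix]
    exact ⟨_, rfl⟩

instance : NoZeroDivisors (genericMatrixAlgebra F n m) :=
  Function.Injective.noZeroDivisors
    (fun x => (⟨(specialization F n m).mapMatrix x, genericMatrixAlgebra_le_comap F n m x.2⟩ :
      subalgebra (cyclicShift F (Fin m × Fin n × Fin n) n)))
    (fun _ _ h => Subtype.ext <|
      Matrix.map_injective (specialization_injective F n m) (congrArg Subtype.val h))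
    (Subtype.ext (map_zero _))
    (fun x y => Subtype.ext (map_mul (specialization F n m).mapMatrix x.1 y.1))

end GenericMatrix

end

theorem generic_matrix_algebra_is_domain_general (F : Type) [Field F] (n m : ℕ)
    (hn : 1 ≤ n)
    (u v : Matrix (Fin n) (Fin n) (MvPolynomial (Fin m × Fin n × Fin n) F))
    (hu : u ∈ genericMatrixAlgebra F n m) (hv : v ∈ genericMatrixAlgebra F n m)
    (huv : u * v = 0) : u = 0 ∨ v = 0 := by
  have : NeZero n := ⟨by omega⟩
  have h : (⟨u, hu⟩ * ⟨v, hv⟩ : genericMatrixAlgebra F n m) = 0 := Subtype.ext huv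
  exact (mul_eq_zero.mp h).imp (congrArg Subtype.val) (congrArg Subtype.val)

/-- **Amitsur's theorem.** The algebra `R_{n,m}` of `m` generic `n × n` matrices over a
field `F` has no zero divisors: if `u, v ∈ R_{n,m}` and `u * v = 0` then `u = 0` or
`v = 0`. -/
theorem generic_matrix_algebra_is_domain (F : Type) [Field F] (n m : ℕ)
    (hn : 1 ≤ n) (hm : 1 ≤ m)
    (u v : Matrix (Fin n) (Fin n) (MvPolynomial (Fin m × Fin n × Fin n) F))
    (hu : u ∈ genericMatrixAlgebra F n m) (hv : v ∈ genericMatrixAlgebra F n m)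
    (huv : u * v = 0) : u = 0 ∨ v = 0 :=
  generic_matrix_algebra_is_domain_general F n m hn u v hu hv huv
end

section
/- Let F be a field, r ≥ 1, and let A be a unital F-algebra containing a unital F-subalgebra S isomorphic to the matrix algebra M_r(F) (with the same multiplicative identity as A). Then A is isomorphic as an F-algebra to M_r(B), where B is the centralizer of S in A, i.e. B = {a ∈ A : as = sa for all s ∈ S}. -/
/-!
The images `E i j = f (single i j 1)` of the standard matrix units under a unital algebra map
`f : Mₙ(R) → A` satisfy `E i j * E k l = δ j k • E i l` and `∑ i, E i i = 1`. An element `a` of `A`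
is decomposed into the matrix with entries `∑ k, E k i * a * E j k`, which commute with every
`E p q` and hence lie in the centralizer `B` of the range of `f`; conversely `M : Mₙ(B)` is
reassembled as `∑ i j, M i j * E i j`. The two maps are mutually inverse, and reassembly is
multiplicative because the entries of a matrix over `B` commute with the matrix units.
-/

open Matrix

namespace AlgHom

variable {R A n : Type*} [CommSemiring R] [Semiring A] [Algebra R A] [Fintype n] [DecidableEq n]
  (f : Matrix n n R →ₐ[R] A)

def matrixUnit (i j : n) : A := f (single i j 1)

theorem matrixUnit_mul_matrixUnit (i j k l : n) :
    f.matrixUnit i j * f.matrixUnit k l = if j = k then f.matrixUnit i l else 0 := by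
  unfold matrixUnit
  split_ifs with h
  · rw [← map_mul, h, single_mul_single_same, one_mul]
  · rw [← map_mul, single_mul_single_of_ne _ _ _ _ h, map_zero]

theorem sum_matrixUnit_self : ∑ i, f.matrixUnit i i = 1 := by
  simp only [matrixUnit, ← map_sum, sum_single_one, map_one]

theorem apply_eq_sum_matrixUnit (M : Matrix n n R) :
    f M = ∑ i, ∑ j, M i j • f.matrixUnit i j := by
  conv_lhs => rw [matrix_eq_sum_single M]
  simp only [map_sum, matrixUnit, ← map_smul, smul_single, smul_eq_mul, mul_one]

theorem mem_centralizer_range_iff {x : A} :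
    x ∈ Subalgebra.centralizer R (Set.range f) ↔
      ∀ i j, f.matrixUnit i j * x = x * f.matrixUnit i j := by
  refine ⟨fun hx i j => (Subalgebra.mem_centralizer_iff R).1 hx _ ⟨_, rfl⟩,
    fun hx => (Subalgebra.mem_centralizer_iff R).2 ?_⟩
  rintro _ ⟨M, rfl⟩
  simp only [apply_eq_sum_matrixUnit, Finset.sum_mul, Finset.mul_sum, smul_mul_assoc,
    mul_smul_comm, hx]

def matrixEntry (a : A) (i j : n) : A := ∑ k, f.matrixUnit k i * a * f.matrixUnit j k

theorem matrixUnit_mul_matrixEntry (a : A) (i j p q : n) :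
    f.matrixUnit p q * f.matrixEntry a i j = f.matrixUnit p i * a * f.matrixUnit j q := by
  simp [matrixEntry, Finset.mul_sum, ← mul_assoc, matrixUnit_mul_matrixUnit]

theorem matrixEntry_mul_matrixUnit (a : A) (i j p q : n) :
    f.matrixEntry a i j * f.matrixUnit p q = f.matrixUnit p i * a * f.matrixUnit j q := by
  simp [matrixEntry, Finset.sum_mul, mul_assoc, matrixUnit_mul_matrixUnit]

theorem matrixEntry_mem_centralizer (a : A) (i j : n) :
    f.matrixEntry a i j ∈ Subalgebra.centralizer R (Set.range f) :=
  f.mem_centralizer_range_iff.2 fun p q => by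
    rw [matrixUnit_mul_matrixEntry, matrixEntry_mul_matrixUnit]

def ofMatrix (M : Matrix n n (Subalgebra.centralizer R (Set.range f))) : A :=
  ∑ i, ∑ j, (M i j : A) * f.matrixUnit i j

theorem matrixUnit_mul_ofMatrix (M : Matrix n n (Subalgebra.centralizer R (Set.range f)))
    (i j : n) : f.matrixUnit i j * f.ofMatrix M = ∑ l, (M j l : A) * f.matrixUnit i l := by
  have hcomm (p q : n) : f.matrixUnit i j * ((M p q : A) * f.matrixUnit p q) =
      (M p q : A) * (f.matrixUnit i j * f.matrixUnit p q) := by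
    rw [← mul_assoc, ← mul_assoc, f.mem_centralizer_range_iff.1 (M p q).2]
  simp [ofMatrix, Finset.mul_sum, hcomm, matrixUnit_mul_matrixUnit]

theorem ofMatrix_mul (M N : Matrix n n (Subalgebra.centralizer R (Set.range f))) :
    f.ofMatrix (M * N) = f.ofMatrix M * f.ofMatrix N := Eq.symm <| calc
  f.ofMatrix M * f.ofMatrix N = ∑ i, ∑ j, (M i j : A) * (f.matrixUnit i j * f.ofMatrix N) := by
    simp only [ofMatrix, Finset.sum_mul, mul_assoc]
  _ = ∑ i, ∑ l, (∑ j, (M i j : A) * N j l) * f.matrixUnit i l := by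
    simp only [matrixUnit_mul_ofMatrix, Finset.mul_sum, Finset.sum_mul, mul_assoc]
    exact Finset.sum_congr rfl fun i _ => Finset.sum_comm
  _ = f.ofMatrix (M * N) := by
    simp only [ofMatrix, Matrix.mul_apply, AddSubmonoidClass.coe_finsetSum, MulMemClass.coe_mul]

theorem ofMatrix_matrixEntry (a : A) :
    f.ofMatrix (of fun i j => ⟨f.matrixEntry a i j, f.matrixEntry_mem_centralizer a i j⟩) = a := by
  simp only [ofMatrix, of_apply, matrixEntry_mul_matrixUnit, ← Finset.mul_sum, ← Finset.sum_mul,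
    sum_matrixUnit_self, one_mul, mul_one]

theorem matrixEntry_ofMatrix (M : Matrix n n (Subalgebra.centralizer R (Set.range f))) (i j : n) :
    f.matrixEntry (f.ofMatrix M) i j = M i j := by
  simp [matrixEntry, matrixUnit_mul_ofMatrix, Finset.sum_mul, mul_assoc, matrixUnit_mul_matrixUnit,
    ← Finset.mul_sum, sum_matrixUnit_self]

theorem ofMatrix_add (M N : Matrix n n (Subalgebra.centralizer R (Set.range f))) :
    f.ofMatrix (M + N) = f.ofMatrix M + f.ofMatrix N := by
  simp only [ofMatrix, Matrix.add_apply, Subalgebra.coe_add, add_mul, Finset.sum_add_distrib]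

theorem ofMatrix_algebraMap (c : R) :
    f.ofMatrix (algebraMap R _ c) = algebraMap R A c := by
  simp [ofMatrix, algebraMap_matrix_apply, apply_ite Subtype.val, ite_mul, ← Finset.mul_sum,
    sum_matrixUnit_self]

def equivMatrixCentralizer : A ≃ₐ[R] Matrix n n (Subalgebra.centralizer R (Set.range f)) :=
  AlgEquiv.symm
    { toFun := f.ofMatrix
      invFun := fun a => of fun i j => ⟨f.matrixEntry a i j, f.matrixEntry_mem_centralizer a i j⟩
      left_inv := fun M => Matrix.ext fun i j => Subtype.ext (f.matrixEntry_ofMatrix M i j)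
      right_inv := f.ofMatrix_matrixEntry
      map_mul' := f.ofMatrix_mul
      map_add' := f.ofMatrix_add
      commutes' := f.ofMatrix_algebraMap }

end AlgHom

theorem matrix_subalgebra_centralizer_general (F : Type) [Field F] (r : ℕ)
    (A : Type) [Ring A] [Algebra F A] (S : Subalgebra F A)
    (e : S ≃ₐ[F] Matrix (Fin r) (Fin r) F) :
    Nonempty (A ≃ₐ[F] Matrix (Fin r) (Fin r)
      (Subalgebra.centralizer F (S : Set A))) := by
  let f : Matrix (Fin r) (Fin r) F →ₐ[F] A := S.val.comp e.symm.toAlgHom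
  have hf : Set.range f = S := by
    simp [f, Set.range_comp, e.symm.surjective.range_eq]
  exact ⟨f.equivMatrixCentralizer.trans
    (AlgEquiv.mapMatrix (Subalgebra.equivOfEq _ _ (congrArg _ hf)))⟩

/-- If a unital `F`-algebra `A` contains a unital `F`-subalgebra `S` isomorphic to the
matrix algebra `M_r(F)`, then `A` is isomorphic as an `F`-algebra to `M_r(B)` where `B` is
the centralizer of `S` in `A`. -/
theorem matrix_subalgebra_centralizer (F : Type) [Field F] (r : ℕ) (hr : 1 ≤ r)
    (A : Type) [Ring A] [Algebra F A] (S : Subalgebra F A)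
    (e : S ≃ₐ[F] Matrix (Fin r) (Fin r) F) :
    Nonempty (A ≃ₐ[F] Matrix (Fin r) (Fin r)
      (Subalgebra.centralizer F (S : Set A))) :=
  matrix_subalgebra_centralizer_general F r A S e
end
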